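/- Let d₁, d₂ be positive integers, A a d₁×d₁ real symmetric matrix, D a d₂×d₂ real symmetric matrix, and P a d₁×d₂ real matrix, and let J be the real symmetric block matrix J = [[A, P], [Pᵀ, D]]. Assume λmin(A) ≠ λmin(D) and set λ⁻ = min(λmin(A), λmin(D)) and δ⁻ = ‖P‖ · tan(½ · arctan(2‖P‖ / |λmin(A) − λmin(D)|)). Then all eigenvalues of J are real and λ⁻ − δ⁻ ≤ λmin(J) ≤ λ⁻. -/

import Mathlib

/-!
Let `a = λmin(A)`, `d = λmin(D)`, `p = ‖P‖`, and let `w = (u, v)` be a unit eigenvector of `J` for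
`λmin(J)`. With `s = ‖u‖`, `t = ‖v‖`, the Rayleigh bounds for `A` and `D` and `|uᵀPv| ≤ p s t` give
`λmin(J) ≥ a s² - 2 p s t + d t²`, the quadratic form of `[[a, -p], [-p, d]]` at the unit vector
`(s, t)`. Hence `λmin(J)` is at least the smallest eigenvalue `(a + d - √((a - d)² + 4p²)) / 2` of
that 2×2 matrix, and the half-angle formula for `tan` turns this into `λ⁻ - δ⁻`. The upper bound
evaluates the quadratic form of `J` at `(u, 0)` and `(0, v)` for bottom eigenvectors of `A` and `D`.
-/

open Matrix

/-- Smallest eigenvalue of a Hermitian (real symmetric) matrix. -/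
noncomputable def lamMin {n : Type*} [Fintype n] [DecidableEq n] {A : Matrix n n ℝ}
    (hA : A.IsHermitian) : ℝ := ⨅ i, hA.eigenvalues i

/-- The ℓ²→ℓ² operator norm of a rectangular real matrix. -/
noncomputable def l2OpNorm {m n : ℕ} (Z : Matrix (Fin m) (Fin n) ℝ) : ℝ :=
  ‖LinearMap.toContinuousLinearMap (Matrix.toEuclideanLin Z)‖

open Real

theorem Real.tan_half_arctan (y : ℝ) : tan (arctan y / 2) = y / (√(1 + y ^ 2) + 1) := by
  set θ := arctan y
  have hcos : 0 < cos (θ / 2) := cos_pos_of_mem_Ioo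
    ⟨by linarith [neg_pi_div_two_lt_arctan y, pi_pos], by linarith [arctan_lt_pi_div_two y, pi_pos]⟩
  have hsin : sin θ = 2 * sin (θ / 2) * cos (θ / 2) := by
    rw [← sin_two_mul, mul_div_cancel₀ θ two_ne_zero]
  have hcos_sq : 1 + cos θ = 2 * cos (θ / 2) ^ 2 := by
    rw [cos_sq, mul_div_cancel₀ θ two_ne_zero]; ring
  have hsqrt : 0 < √(1 + y ^ 2) := by positivity
  calc tan (θ / 2) = sin θ / (1 + cos θ) := by
        rw [tan_eq_sin_div_cos, hsin, hcos_sq]; field_simp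
    _ = y / (√(1 + y ^ 2) + 1) := by
        rw [sin_arctan, cos_arctan]; field_simp

theorem Real.mul_tan_half_arctan_two_mul_div (p m : ℝ) (hm : 0 < m) :
    p * tan (1 / 2 * arctan (2 * p / m)) = (√(m ^ 2 + 4 * p ^ 2) - m) / 2 := by
  set q := √(m ^ 2 + 4 * p ^ 2)
  have hq : q ^ 2 = m ^ 2 + 4 * p ^ 2 := sq_sqrt (by positivity)
  have hqm : 0 < q + m := by positivity
  have hsqrt : √(1 + (2 * p / m) ^ 2) = q / m := by
    rw [← sqrt_sq (by positivity : 0 ≤ q / m), div_pow q, hq]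
    congr 1; field_simp; ring
  rw [one_div_mul_eq_div, tan_half_arctan, hsqrt]
  field_simp
  linear_combination -hq

theorem Real.min_sub_mul_tan_half_arctan_div_abs_sub {a d : ℝ} (p : ℝ) (h : a ≠ d) :
    min a d - p * tan (1 / 2 * arctan (2 * p / |a - d|)) =
      (a + d - √((a - d) ^ 2 + 4 * p ^ 2)) / 2 := by
  rw [mul_tan_half_arctan_two_mul_div p _ (abs_pos.mpr (sub_ne_zero.mpr h)), sq_abs]
  have hmax := max_sub_min_eq_abs' a d
  have hsum := min_add_max a d
  linarith

/-- The smallest eigenvalue of `[[a, b], [b, d]]` bounds its quadratic form on unit vectors. -/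
theorem half_add_sub_sqrt_le (a d b s t : ℝ) (hst : s ^ 2 + t ^ 2 = 1) :
    (a + d - √((a - d) ^ 2 + 4 * b ^ 2)) / 2 ≤ a * s ^ 2 + 2 * b * s * t + d * t ^ 2 := by
  set q := √((a - d) ^ 2 + 4 * b ^ 2)
  have hq : q ^ 2 = (a - d) ^ 2 + 4 * b ^ 2 := sq_sqrt (by positivity)
  -- Cauchy–Schwarz for `(a - d, 2b)` against the unit vector `(s² - t², 2st)`.
  have hcs : ((a - d) * (s ^ 2 - t ^ 2) + 4 * b * s * t) ^ 2 ≤ q ^ 2 := by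
    have hlagrange : ((a - d) * (s ^ 2 - t ^ 2) + 4 * b * s * t) ^ 2
        + ((a - d) * (2 * s * t) - 2 * b * (s ^ 2 - t ^ 2)) ^ 2
        = ((a - d) ^ 2 + 4 * b ^ 2) * (s ^ 2 + t ^ 2) ^ 2 := by ring
    rw [hst, ← hq] at hlagrange
    nlinarith [sq_nonneg ((a - d) * (2 * s * t) - 2 * b * (s ^ 2 - t ^ 2))]
  have hlower := (abs_le_of_sq_le_sq' hcs (sqrt_nonneg _)).1
  linear_combination (1 / 2 : ℝ) * hlower - (a + d) / 2 * hst

theorem Matrix.IsHermitian.im_eq_zero_of_mem_spectrum_map {n : Type*} [Fintype n] [DecidableEq n]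
    {M : Matrix n n ℝ} (hM : M.IsHermitian) {μ : ℂ}
    (hμ : μ ∈ spectrum ℂ (M.map (algebraMap ℝ ℂ))) : μ.im = 0 := by
  have hM' := hM.map (algebraMap ℝ ℂ) fun x ↦ by simp
  rw [hM'.spectrum_eq_image_range] at hμ
  obtain ⟨_, _, rfl⟩ := hμ
  exact Complex.ofReal_im _

theorem Matrix.sumElim_dotProduct_fromBlocks_mulVec_sumElim {R m n : Type*} [CommSemiring R]
    [Fintype m] [Fintype n] (A : Matrix m m R) (B : Matrix m n R) (D : Matrix n n R)
    (u : m → R) (v : n → R) :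
    Sum.elim u v ⬝ᵥ (fromBlocks A B Bᵀ D *ᵥ Sum.elim u v) =
      u ⬝ᵥ (A *ᵥ u) + v ⬝ᵥ (D *ᵥ v) + 2 * (u ⬝ᵥ (B *ᵥ v)) := by
  rw [fromBlocks_mulVec, sumElim_dotProduct_sumElim, Sum.elim_comp_inl, Sum.elim_comp_inr,
    dotProduct_add, dotProduct_add, dotProduct_mulVec v, vecMul_transpose,
    dotProduct_comm (B *ᵥ v)]
  ring

theorem EuclideanSpace.norm_toLp_sq {n : Type*} [Fintype n] (x : n → ℝ) :
    ‖WithLp.toLp 2 x‖ ^ 2 = x ⬝ᵥ x := by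
  rw [← real_inner_self_eq_norm_sq, EuclideanSpace.inner_toLp_toLp, star_trivial]

theorem abs_dotProduct_mulVec_le_l2OpNorm {m n : ℕ} (P : Matrix (Fin m) (Fin n) ℝ)
    (u : Fin m → ℝ) (v : Fin n → ℝ) :
    |u ⬝ᵥ (P *ᵥ v)| ≤ l2OpNorm P * ‖WithLp.toLp 2 u‖ * ‖WithLp.toLp 2 v‖ := by
  have hinner :
      u ⬝ᵥ (P *ᵥ v) = inner ℝ (WithLp.toLp 2 u) (toEuclideanLin P (WithLp.toLp 2 v)) := by
    rw [toLpLin_toLp, EuclideanSpace.inner_toLp_toLp, star_trivial, dotProduct_comm, toLin'_apply]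
  calc |u ⬝ᵥ (P *ᵥ v)| ≤ ‖WithLp.toLp 2 u‖ * ‖toEuclideanLin P (WithLp.toLp 2 v)‖ :=
        hinner ▸ abs_real_inner_le_norm _ _
    _ ≤ ‖WithLp.toLp 2 u‖ * (l2OpNorm P * ‖WithLp.toLp 2 v‖) :=
        mul_le_mul_of_nonneg_left
          ((LinearMap.toContinuousLinearMap (toEuclideanLin P)).le_opNorm _) (norm_nonneg _)
    _ = l2OpNorm P * ‖WithLp.toLp 2 u‖ * ‖WithLp.toLp 2 v‖ := by ring

section lamMin

variable {n : Type*} [Fintype n] [DecidableEq n] {M : Matrix n n ℝ}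

open MatrixOrder in
theorem algebraMap_lamMin_le (hM : M.IsHermitian) :
    algebraMap ℝ (Matrix n n ℝ) (lamMin hM) ≤ M := by
  rw [algebraMap_le_iff_le_spectrum hM.isSelfAdjoint, hM.spectrum_real_eq_range_eigenvalues]
  rintro _ ⟨i, rfl⟩
  exact ciInf_le (Finite.bddBelow_range _) i

theorem lamMin_mul_dotProduct_self_le (hM : M.IsHermitian) (x : n → ℝ) :
    lamMin hM * (x ⬝ᵥ x) ≤ x ⬝ᵥ (M *ᵥ x) := by
  have := (le_iff.mp (algebraMap_lamMin_le hM)).dotProduct_mulVec_nonneg x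
  simpa [sub_mulVec, Algebra.algebraMap_eq_smul_one, smul_mulVec] using this

theorem exists_dotProduct_mulVec_eq_lamMin [Nonempty n] (hM : M.IsHermitian) :
    ∃ x : n → ℝ, x ⬝ᵥ x = 1 ∧ x ⬝ᵥ (M *ᵥ x) = lamMin hM := by
  obtain ⟨i, hi⟩ := exists_eq_ciInf_of_finite (f := hM.eigenvalues)
  have hunit : (hM.eigenvectorBasis i).ofLp ⬝ᵥ (hM.eigenvectorBasis i).ofLp = 1 := by
    have := real_inner_self_eq_norm_sq (hM.eigenvectorBasis i)
    rwa [hM.eigenvectorBasis.orthonormal.1 i, one_pow, EuclideanSpace.inner_eq_star_dotProduct,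
      star_trivial] at this
  refine ⟨_, hunit, ?_⟩
  rw [hM.mulVec_eigenvectorBasis, dotProduct_smul, hunit, smul_eq_mul, mul_one, hi]
  rfl

end lamMin

section fromBlocks

variable {m n : Type*} [Fintype m] [Fintype n] [DecidableEq m] [DecidableEq n]
  {A : Matrix m m ℝ} {B : Matrix m n ℝ} {D : Matrix n n ℝ}

theorem lamMin_fromBlocks_le_left [Nonempty m] (hA : A.IsHermitian)
    (hJ : (fromBlocks A B Bᵀ D).IsHermitian) : lamMin hJ ≤ lamMin hA := by
  obtain ⟨u, hu, huA⟩ := exists_dotProduct_mulVec_eq_lamMin hA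
  simpa [sumElim_dotProduct_fromBlocks_mulVec_sumElim, sumElim_dotProduct_sumElim, hu, huA] using
    lamMin_mul_dotProduct_self_le hJ (Sum.elim u 0)

theorem lamMin_fromBlocks_le_right [Nonempty n] (hD : D.IsHermitian)
    (hJ : (fromBlocks A B Bᵀ D).IsHermitian) : lamMin hJ ≤ lamMin hD := by
  obtain ⟨v, hv, hvD⟩ := exists_dotProduct_mulVec_eq_lamMin hD
  simpa [sumElim_dotProduct_fromBlocks_mulVec_sumElim, sumElim_dotProduct_sumElim, hv, hvD] using
    lamMin_mul_dotProduct_self_le hJ (Sum.elim 0 v)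

end fromBlocks

theorem half_add_sub_sqrt_le_lamMin_fromBlocks {m n : ℕ} [Nonempty (Fin m ⊕ Fin n)]
    {A : Matrix (Fin m) (Fin m) ℝ} {P : Matrix (Fin m) (Fin n) ℝ} {D : Matrix (Fin n) (Fin n) ℝ}
    (hA : A.IsHermitian) (hD : D.IsHermitian) (hJ : (fromBlocks A P Pᵀ D).IsHermitian) :
    (lamMin hA + lamMin hD - √((lamMin hA - lamMin hD) ^ 2 + 4 * l2OpNorm P ^ 2)) / 2 ≤
      lamMin hJ := by
  obtain ⟨w, hw, hwJ⟩ := exists_dotProduct_mulVec_eq_lamMin hJ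
  set u := w ∘ Sum.inl
  set v := w ∘ Sum.inr
  rw [← Sum.elim_comp_inl_inr w] at hw hwJ
  rw [sumElim_dotProduct_sumElim] at hw
  rw [sumElim_dotProduct_fromBlocks_mulVec_sumElim] at hwJ
  set s := ‖WithLp.toLp 2 u‖
  set t := ‖WithLp.toLp 2 v‖
  have hst : s ^ 2 + t ^ 2 = 1 := by
    rw [EuclideanSpace.norm_toLp_sq, EuclideanSpace.norm_toLp_sq, hw]
  have hAu := lamMin_mul_dotProduct_self_le hA u
  have hDv := lamMin_mul_dotProduct_self_le hD v
  rw [← EuclideanSpace.norm_toLp_sq] at hAu hDv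
  have hPuv := neg_le_of_abs_le (abs_dotProduct_mulVec_le_l2OpNorm P u v)
  rw [← neg_sq (l2OpNorm P)]
  calc _ ≤ lamMin hA * s ^ 2 + 2 * (-l2OpNorm P) * s * t + lamMin hD * t ^ 2 :=
        half_add_sub_sqrt_le _ _ _ s t hst
    _ ≤ lamMin hJ := by linarith

theorem stmt5 {d₁ d₂ : ℕ} (hd₁ : 0 < d₁) (hd₂ : 0 < d₂)
    (A : Matrix (Fin d₁) (Fin d₁) ℝ) (D : Matrix (Fin d₂) (Fin d₂) ℝ)
    (P : Matrix (Fin d₁) (Fin d₂) ℝ)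
    (hA : A.IsHermitian) (hD : D.IsHermitian)
    (hJ : (Matrix.fromBlocks A P Pᵀ D).IsHermitian)
    (hne : lamMin hA ≠ lamMin hD) :
    (∀ μ ∈ spectrum ℂ ((Matrix.fromBlocks A P Pᵀ D).map (algebraMap ℝ ℂ)), μ.im = 0) ∧
    min (lamMin hA) (lamMin hD) -
        l2OpNorm P * Real.tan
          ((1 / 2) * Real.arctan (2 * l2OpNorm P / |lamMin hA - lamMin hD|)) ≤ lamMin hJ ∧
    lamMin hJ ≤ min (lamMin hA) (lamMin hD) := by
  have : Nonempty (Fin d₁) := Fin.pos_iff_nonempty.mp hd₁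
  have : Nonempty (Fin d₂) := Fin.pos_iff_nonempty.mp hd₂
  refine ⟨fun μ hμ ↦ hJ.im_eq_zero_of_mem_spectrum_map hμ, ?_,
    le_min (lamMin_fromBlocks_le_left hA hJ) (lamMin_fromBlocks_le_right hD hJ)⟩
  rw [min_sub_mul_tan_half_arctan_div_abs_sub _ hne]
  exact half_add_sub_sqrt_le_lamMin_fromBlocks hA hD hJ
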